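/- Let r ≥ 1 and t > 0. If Ent(f) ≤ t·E(f, log f) holds for every r-regular function f : X → (0,∞), then Ent(f) ≤ H(r)·t·E(√f, √f) holds for every r-regular function f : X → (0,∞), where H(r) := ((√r + 1)/(√r − 1))·log r for r > 1 and H(1) := 4. Equivalently, t_LS(r) ≤ H(r)·t_MLS(r) for the restricted optimal constants. -/

import Mathlib

open Finset

noncomputable section

variable {X : Type*} [Fintype X] [DecidableEq X] [Nonempty X]

/-- Dirichlet form `E(f,g) = (1/2) ∑_{x,y} π(x) Q(x,y) (f(x)-f(y))(g(x)-g(y))`. -/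
def dirichletForm (π : X → ℝ) (Q : X → X → ℝ) (f g : X → ℝ) : ℝ :=
  (1 / 2) * ∑ x : X, ∑ y : X, π x * Q x y * (f x - f y) * (g x - g y)

/-- Mean `E[f] = ∑_x π(x) f(x)`. -/
def mean (π : X → ℝ) (f : X → ℝ) : ℝ := ∑ x : X, π x * f x

/-- Entropy `Ent(f) = E[f log f] - E[f] log E[f]`. -/
def entropy (π : X → ℝ) (f : X → ℝ) : ℝ :=
  mean π (fun x => f x * Real.log (f x)) - mean π f * Real.log (mean π f)

/-- Variance `Var(f) = E[f²] - E[f]²`. -/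
def variance (π : X → ℝ) (f : X → ℝ) : ℝ :=
  mean π (fun x => f x ^ 2) - (mean π f) ^ 2

/-- Total jump rate `Q(x) = ∑_{y ≠ x} Q(x,y)`. -/
def jumpRate (Q : X → X → ℝ) (x : X) : ℝ := ∑ y ∈ univ.erase x, Q x y

/-- Sparsity parameter `p = min_{(x,y) ∈ E} Q(x,y) / max(Q(x), Q(y,x))`. -/
def sparsity (Q : X → X → ℝ) : ℝ :=
  sInf {s : ℝ | ∃ x y : X, x ≠ y ∧ 0 < Q x y ∧
    s = Q x y / max (jumpRate Q x) (Q y x)}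

/-- The transition graph `(X, E)` (symmetric since under reversibility
`Q(x,y) > 0 ↔ Q(y,x) > 0`). -/
def chainGraph (Q : X → X → ℝ) : SimpleGraph X where
  Adj x y := x ≠ y ∧ (0 < Q x y ∨ 0 < Q y x)
  symm := ⟨fun x y h => ⟨h.1.symm, h.2.symm⟩⟩
  loopless := ⟨fun x h => h.1 rfl⟩

/-- Graph distance on `(X, E)`. -/
def graphDist (Q : X → X → ℝ) (x y : X) : ℕ := (chainGraph Q).dist x y

/-- Regularization `f⋆(x) = max_z r^{-d(x,z)} f(z)`. -/
def fStar (Q : X → X → ℝ) (r : ℝ) (f : X → ℝ) (x : X) : ℝ :=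
  univ.sup' univ_nonempty (fun z => r ^ (-(graphDist Q x z : ℤ)) * f z)

/-- `(x,y)` is an allowed transition. -/
def IsEdge (Q : X → X → ℝ) (e : X × X) : Prop := e.1 ≠ e.2 ∧ 0 < Q e.1 e.2

/-- The edge set `E = {(x,y) : x ≠ y, Q(x,y) > 0}` as a finset. -/
def edges (Q : X → X → ℝ) : Finset (X × X) :=
  univ.filter (fun e => e.1 ≠ e.2 ∧ 0 < Q e.1 e.2)

/-- Edge weight `c(x,y) = π(x) Q(x,y)`. -/
def edgeWeight (π : X → ℝ) (Q : X → X → ℝ) (e : X × X) : ℝ := π e.1 * Q e.1 e.2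

/-- Distance between edges: `d(e,e') = ℓ - 1` where `ℓ` is the minimal length of a
path `(x_0, …, x_ℓ)` with `(x_0,x_1) = e` and `(x_{ℓ-1}, x_ℓ) = e'`. -/
def edgeDist (Q : X → X → ℝ) (e e' : X × X) : ℕ :=
  sInf {n : ℕ | ∃ c : ℕ → X, c 0 = e.1 ∧ c 1 = e.2 ∧ c n = e'.1 ∧ c (n + 1) = e'.2 ∧
    ∀ i < n + 1, (chainGraph Q).Adj (c i) (c (i + 1))}

/-- `κ = max_{e' ∈ E} (1/c(e')) ∑_{e ∈ E} c(e) r^{-d(e,e')}`. -/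
def kappa (π : X → ℝ) (Q : X → X → ℝ) (r : ℝ) : ℝ :=
  sSup {k : ℝ | ∃ e' ∈ edges Q, k = (1 / edgeWeight π Q e') *
    ∑ e ∈ edges Q, edgeWeight π Q e * r ^ (-(edgeDist Q e e' : ℤ))}

/-- `H(w) = ((√w + 1)/(√w - 1)) log w` for `w ≠ 1`, and `H(1) = 4`. -/
def Hfun (w : ℝ) : ℝ :=
  if w = 1 then 4 else ((Real.sqrt w + 1) / (Real.sqrt w - 1)) * Real.log w

/-- A function is `r`-regular if `f(x) ≤ r f(y)` across every edge. -/
def IsRRegular (Q : X → X → ℝ) (r : ℝ) (f : X → ℝ) : Prop :=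
  ∀ x y : X, x ≠ y → 0 < Q x y → f x ≤ r * f y

/-- Maximum degree of the graph `(X, E)`. -/
def maxDegree (Q : X → X → ℝ) : ℕ :=
  univ.sup (fun x : X => Nat.card {y : X // (chainGraph Q).Adj x y})

/-- Irreducibility: every state can be reached from every other through allowed
transitions. -/
def MarkovIrreducible (Q : X → X → ℝ) : Prop :=
  ∀ x y : X, Relation.ReflTransGen (fun a b => a ≠ b ∧ 0 < Q a b) x y

/-!
For `0 < b < a` one has the identity `(a - b)(log a - log b) = H(a/b) (√a - √b)²`, and on
`(1, ∞)` the function `H(w)` is twice the slope of the secant from `1` to `√w` of the convex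
function `φ(x) = (x + 1) log x` (which vanishes at `1`), hence is monotone. Across an edge,
`r`-regularity puts the ratio of the two values of `f` in `[1/r, r]`, so every edge term of
`E(f, log f)` is at most `H(r)` times the corresponding term of `E(√f, √f)`; the modified
log-Sobolev inequality then gives the claim.
-/

lemma log_add_inv_monotoneOn : MonotoneOn (fun x : ℝ => Real.log x + x⁻¹) (Set.Ici 1) := by
  intro a ha b hb hab
  simp only [Set.mem_Ici] at ha hb
  have ha0 : 0 < a := by linarith
  have hb0 : 0 < b := by linarith
  have hlog := Real.one_sub_inv_le_log_of_pos (div_pos hb0 ha0)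
  rw [Real.log_div hb0.ne' ha0.ne', inv_div] at hlog
  have hinv : a⁻¹ - b⁻¹ ≤ 1 - a / b := by
    rw [inv_sub_inv ha0.ne' hb0.ne', one_sub_div hb0.ne']
    exact div_le_div_of_nonneg_left (by linarith) hb0 (by nlinarith)
  simp only
  linarith

lemma convexOn_add_one_mul_log :
    ConvexOn ℝ (Set.Ici 1) (fun x : ℝ => (x + 1) * Real.log x) := by
  have hderiv : ∀ x : ℝ, 0 < x →
      HasDerivAt (fun x => (x + 1) * Real.log x) (Real.log x + 1 + x⁻¹) x := by
    intro x hx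
    refine (((hasDerivAt_id x).add_const 1).mul (Real.hasDerivAt_log hx.ne')).congr_deriv ?_
    simp only [id, one_mul, add_mul, mul_inv_cancel₀ hx.ne']
    ring
  refine MonotoneOn.convexOn_of_deriv (convex_Ici 1) ?_ ?_ ?_
  · exact fun x hx =>
      (hderiv x (zero_lt_one.trans_le hx)).continuousAt.continuousWithinAt
  · rw [interior_Ici]
    exact fun x hx =>
      (hderiv x (zero_lt_one.trans hx)).differentiableAt.differentiableWithinAt
  · rw [interior_Ici]
    intro a ha b hb hab
    rw [(hderiv a (zero_lt_one.trans ha)).deriv, (hderiv b (zero_lt_one.trans hb)).deriv]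
    have := log_add_inv_monotoneOn (Set.Ioi_subset_Ici_self ha) (Set.Ioi_subset_Ici_self hb) hab
    simp only at this
    linarith

lemma add_one_mul_log_div_sub_one_monotoneOn :
    MonotoneOn (fun x : ℝ => (x + 1) * Real.log x / (x - 1)) (Set.Ioi 1) := by
  intro x hx y hy hxy
  simpa using convexOn_add_one_mul_log.secant_mono Set.self_mem_Ici
    (Set.Ioi_subset_Ici_self hx) (Set.Ioi_subset_Ici_self hy) hx.ne' hy.ne' hxy

lemma Hfun_monotoneOn : MonotoneOn Hfun (Set.Ioi 1) := by
  have hsecant : ∀ w ∈ Set.Ioi (1 : ℝ),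
      Hfun w = 2 * ((√w + 1) * Real.log √w / (√w - 1)) := by
    intro w hw
    rw [Hfun, if_neg (ne_of_gt hw), Real.log_sqrt (zero_le_one.trans hw.out.le)]
    ring
  have hsqrt : ∀ w ∈ Set.Ioi (1 : ℝ), √w ∈ Set.Ioi 1 := fun w hw =>
    Real.lt_sqrt_of_sq_lt (by simpa using hw.out)
  intro v hv w hw hvw
  rw [hsecant v hv, hsecant w hw]
  gcongr 2 * ?_
  exact add_one_mul_log_div_sub_one_monotoneOn (hsqrt v hv) (hsqrt w hw)
    (Real.sqrt_le_sqrt hvw)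

lemma sub_mul_log_sub_log_eq_Hfun_div_mul {a b : ℝ} (ha : 0 < a) (hb : 0 < b) (hab : a ≠ b) :
    (a - b) * (Real.log a - Real.log b) = Hfun (a / b) * (√a - √b) ^ 2 := by
  have hne : a / b ≠ 1 := by rwa [Ne, div_eq_one_iff_eq hb.ne']
  have hdiff : a - b = (√a + √b) * (√a - √b) := by
    rw [← sq_sub_sq, Real.sq_sqrt ha.le, Real.sq_sqrt hb.le]
  rw [Hfun, if_neg hne, Real.sqrt_div ha.le, Real.log_div ha.ne' hb.ne', hdiff]
  field_simp

lemma sub_mul_log_sub_log_le_Hfun_mul {r a b : ℝ} (ha : 0 < a) (hb : 0 < b)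
    (hab : a ≤ r * b) (hba : b ≤ r * a) :
    (a - b) * (Real.log a - Real.log b) ≤ Hfun r * (√a - √b) ^ 2 := by
  wlog hlt : b < a generalizing a b
  · rcases (not_lt.mp hlt).eq_or_lt with rfl | hlt
    · simp
    · convert this hb ha hba hab hlt using 1 <;> ring
  rw [sub_mul_log_sub_log_eq_Hfun_div_mul ha hb hlt.ne']
  have h1 : 1 < a / b := (one_lt_div hb).mpr hlt
  have h2 : a / b ≤ r := (div_le_iff₀ hb).mpr hab
  exact mul_le_mul_of_nonneg_right (Hfun_monotoneOn h1 (h1.trans_le h2) h2) (sq_nonneg _)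

omit [DecidableEq X] [Nonempty X] in
lemma dirichletForm_log_le_Hfun_mul_sqrt (π : X → ℝ) (Q : X → X → ℝ)
    (hQ : ∀ x y : X, x ≠ y → 0 ≤ Q x y) (hπpos : ∀ x : X, 0 < π x)
    (hrev : ∀ x y : X, π x * Q x y = π y * Q y x) {r : ℝ} {f : X → ℝ}
    (hf : ∀ x, 0 < f x) (hreg : IsRRegular Q r f) :
    dirichletForm π Q f (fun x => Real.log (f x)) ≤
      Hfun r * dirichletForm π Q (fun x => √(f x)) (fun x => √(f x)) := by
  have hedge : ∀ x y : X,
      π x * Q x y * (f x - f y) * (Real.log (f x) - Real.log (f y)) ≤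
        Hfun r * (π x * Q x y * (√(f x) - √(f y)) * (√(f x) - √(f y))) := by
    intro x y
    rcases eq_or_ne x y with rfl | hxy
    · simp
    rcases (hQ x y hxy).eq_or_lt with hQ0 | hQxy
    · simp [← hQ0]
    have hQyx : 0 < Q y x :=
      pos_of_mul_pos_right (hrev x y ▸ mul_pos (hπpos x) hQxy) (hπpos y).le
    calc _ = π x * Q x y * ((f x - f y) * (Real.log (f x) - Real.log (f y))) := by ring
      _ ≤ π x * Q x y * (Hfun r * (√(f x) - √(f y)) ^ 2) :=
        mul_le_mul_of_nonneg_left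
          (sub_mul_log_sub_log_le_Hfun_mul (hf x) (hf y) (hreg x y hxy hQxy)
            (hreg y x hxy.symm hQyx))
          (mul_nonneg (hπpos x).le hQxy.le)
      _ = _ := by ring
  unfold dirichletForm
  rw [mul_left_comm]
  refine mul_le_mul_of_nonneg_left ?_ (by norm_num)
  rw [mul_sum]
  refine sum_le_sum fun x _ => ?_
  rw [mul_sum]
  exact sum_le_sum fun y _ => hedge x y

theorem restricted_lsi_le_Hfun_mul_mlsi_general
    (π : X → ℝ) (Q : X → X → ℝ)
    (hQ : ∀ x y : X, x ≠ y → 0 ≤ Q x y)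
    (hπpos : ∀ x : X, 0 < π x)
    (hrev : ∀ x y : X, π x * Q x y = π y * Q y x)
    (r : ℝ) (t : ℝ) (ht : 0 < t)
    (hMLS : ∀ f : X → ℝ, (∀ x, 0 < f x) → IsRRegular Q r f →
      entropy π f ≤ t * dirichletForm π Q f (fun x => Real.log (f x))) :
     ∀ f : X → ℝ, (∀ x, 0 < f x) → IsRRegular Q r f →
      entropy π f ≤ Hfun r * t *
        dirichletForm π Q (fun x => Real.sqrt (f x)) (fun x => Real.sqrt (f x)) := by
  intro f hf hreg
  calc entropy π f ≤ t * dirichletForm π Q f (fun x => Real.log (f x)) := hMLS f hf hreg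
    _ ≤ t * (Hfun r * dirichletForm π Q (fun x => √(f x)) (fun x => √(f x))) :=
      mul_le_mul_of_nonneg_left
        (dirichletForm_log_le_Hfun_mul_sqrt π Q hQ hπpos hrev hf hreg) ht.le
    _ = Hfun r * t * dirichletForm π Q (fun x => √(f x)) (fun x => √(f x)) := by ring

theorem restricted_lsi_le_Hfun_mul_mlsi
    (π : X → ℝ) (Q : X → X → ℝ)
    (hQ : ∀ x y : X, x ≠ y → 0 ≤ Q x y)
    (hQsum : ∀ x : X, ∑ y : X, Q x y = 0)
    (hirr : MarkovIrreducible Q)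
    (hπpos : ∀ x : X, 0 < π x)
    (hπsum : ∑ x : X, π x = 1)
    (hrev : ∀ x y : X, π x * Q x y = π y * Q y x)
    (r : ℝ) (hr : 1 ≤ r) (t : ℝ) (ht : 0 < t)
    (hMLS : ∀ f : X → ℝ, (∀ x, 0 < f x) → IsRRegular Q r f →
      entropy π f ≤ t * dirichletForm π Q f (fun x => Real.log (f x))) :
     ∀ f : X → ℝ, (∀ x, 0 < f x) → IsRRegular Q r f →
      entropy π f ≤ Hfun r * t *
        dirichletForm π Q (fun x => Real.sqrt (f x)) (fun x => Real.sqrt (f x)) :=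
  restricted_lsi_le_Hfun_mul_mlsi_general π Q hQ hπpos hrev r t ht hMLS

end
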